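/- Fourier-block description of the Drazin inverse: let A ∈ ℝ^{n×n×p} with bcirc(A) = (F_p* ⊗ I_n)·diag(A_1,…,A_p)·(F_p ⊗ I_n). Then the Drazin inverse A^D of A exists as a real tensor, and bcirc(A^D) = (F_p* ⊗ I_n)·diag(A_1^D,…,A_p^D)·(F_p ⊗ I_n), where A_k^D is the matrix Drazin inverse of the Fourier block A_k. -/

import Mathlib

open Matrix Complex BigOperators Kronecker

/-- A third-order tensor, represented by its frontal slices (indexed cyclically). -/
abbrev Tensor (F : Type*) (m n p : ℕ) : Type _ :=
  ZMod p → Matrix (Fin m) (Fin n) F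

/-- The block-circulant matrix of a tensor: block (i,j) is slice (i - j mod p). -/
def bcirc {F : Type*} {m n p : ℕ} (A : Tensor F m n p) :
    Matrix (ZMod p × Fin m) (ZMod p × Fin n) F :=
  Matrix.of fun ir jc => A (ir.1 - jc.1) ir.2 jc.2

/-- The t-product of tensors: (A*B)^{(i)} = ∑_j A^{(i-j)} B^{(j)}. -/
def tpr {F : Type*} [CommRing F] {m n l p : ℕ} [NeZero p]
    (A : Tensor F m n p) (B : Tensor F n l p) : Tensor F m l p :=
  fun i => ∑ j : ZMod p, A (i - j) * B j

/-- The identity tensor: first frontal slice is I_n, others are zero. -/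
def tId (F : Type*) [CommRing F] (n p : ℕ) [NeZero p] : Tensor F n n p :=
  fun i => if i = 0 then 1 else 0

/-- Tensor transpose: transpose each slice and reverse the order of slices 2..p. -/
def tT {F : Type*} {m n p : ℕ} (A : Tensor F m n p) : Tensor F n m p :=
  fun i => (A (-i))ᵀ

/-- ξ = e^{-2πi/p}. -/
noncomputable def xi (p : ℕ) : ℂ :=
  Complex.exp (-(2 * Real.pi * Complex.I) / p)

/-- The normalized DFT matrix of order p. -/
noncomputable def Fmat (p : ℕ) : Matrix (ZMod p) (ZMod p) ℂ :=
  Matrix.of fun j k => (1 / (Real.sqrt p : ℂ)) * xi p ^ (j.val * k.val)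

/-- The Fourier blocks of a complex tensor: A_i = ∑_k ξ^{(i)(k)} A^{(k)} (0-based). -/
noncomputable def fblock {m n p : ℕ} [NeZero p] (A : Tensor ℂ m n p) (i : ZMod p) :
    Matrix (Fin m) (Fin n) ℂ :=
  ∑ k : ZMod p, xi p ^ (i.val * k.val) • A k

/-- Complexification of a real tensor. -/
def cplx {m n p : ℕ} (A : Tensor ℝ m n p) : Tensor ℂ m n p :=
  fun i => (A i).map (Complex.ofReal)

/-- Block diagonal matrix with p equal-size blocks. -/
def blockDiag {m n p : ℕ} (M : ZMod p → Matrix (Fin m) (Fin n) ℂ) :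
    Matrix (ZMod p × Fin m) (ZMod p × Fin n) ℂ :=
  Matrix.of fun ir jc => if ir.1 = jc.1 then M ir.1 ir.2 jc.2 else 0

/-- Entrywise conjugation of a complex matrix. -/
def conjM {m n : ℕ} (M : Matrix (Fin m) (Fin n) ℂ) : Matrix (Fin m) (Fin n) ℂ :=
  M.map (starRingEnd ℂ)

/-- A complex matrix is real if all entries have zero imaginary part. -/
def IsRealM {m n : ℕ} (M : Matrix (Fin m) (Fin n) ℂ) : Prop :=
  ∀ r c, (M r c).im = 0

/-- Tensor power with respect to the t-product. -/
def tpow {F : Type*} [CommRing F] {n p : ℕ} [NeZero p] (A : Tensor F n n p) : ℕ → Tensor F n n p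
  | 0 => tId F n p
  | k + 1 => tpr A (tpow A k)

/-- The Drazin equations for complex matrices. -/
def IsDrazinM {n : ℕ} (M X : Matrix (Fin n) (Fin n) ℂ) : Prop :=
  (∃ k : ℕ, M ^ (k + 1) * X = M ^ k) ∧ X * M * X = X ∧ M * X = X * M

/-!
Conjugation by `F_p ⊗ I_n` block-diagonalises `bcirc`: the Fourier blocks of a tensor are the
discrete Fourier transform (`ZMod.dft`) of its frontal slices, and the transform turns the
t-product, a convolution over `ZMod p`, into blockwise multiplication. So the tensor whose
Fourier blocks are the Drazin inverses of the blocks `A_i` satisfies the tensor Drazin equations.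
For real `A` the blocks satisfy `A_{-i} = conj A_i`; uniqueness of Drazin inverses carries this
symmetry over to the inverses, and then their inverse transform is real.
-/

def IsDrazin {M : Type*} [Monoid M] (a x : M) : Prop :=
  (∃ k : ℕ, a ^ (k + 1) * x = a ^ k) ∧ x * a * x = x ∧ a * x = x * a

namespace IsDrazin

variable {M N : Type*} [Monoid M] [Monoid N] {a x y : M}

theorem pow_succ_mul_of_le {k m : ℕ} (h : a ^ (k + 1) * x = a ^ k) (hkm : k ≤ m) :
    a ^ (m + 1) * x = a ^ m := by
  obtain ⟨t, rfl⟩ := Nat.exists_eq_add_of_le hkm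
  rw [show k + t + 1 = t + (k + 1) by omega, pow_add, mul_assoc, h, ← pow_add, add_comm]

theorem commute (h : IsDrazin a x) : Commute a x := h.2.2

theorem mul_pow_succ_mul_pow (h : IsDrazin a x) (m : ℕ) : x ^ (m + 1) * a ^ m = x := by
  have hxa : x * (x * a) = x := by rw [← h.2.2, ← mul_assoc, h.2.1]
  have key : ∀ m : ℕ, x * (x * a) ^ m = x := by
    intro m
    induction m with
    | zero => rw [pow_zero, mul_one]
    | succ m ih => rw [pow_succ', ← mul_assoc, hxa, ih]
  rw [pow_succ', mul_assoc, ← h.commute.symm.mul_pow, key]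

theorem pow_mul_pow_succ (h : IsDrazin a x) (m : ℕ) : a ^ m * x ^ (m + 1) = x := by
  have hax : a * x * x = x := by rw [h.2.2, h.2.1]
  have key : ∀ m : ℕ, (a * x) ^ m * x = x := by
    intro m
    induction m with
    | zero => rw [pow_zero, one_mul]
    | succ m ih => rw [pow_succ, mul_assoc, hax, ih]
  rw [pow_succ, ← mul_assoc, ← h.commute.mul_pow, key]

theorem unique (hx : IsDrazin a x) (hy : IsDrazin a y) : x = y := by
  obtain ⟨k, hk⟩ := hx.1
  obtain ⟨l, hl⟩ := hy.1
  set m := max k l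
  have hxm : x * a ^ (m + 1) = a ^ m := by
    rw [← (hx.commute.pow_left (m + 1)).eq, pow_succ_mul_of_le hk (le_max_left k l)]
  have hym : a ^ (m + 1) * y = a ^ m := pow_succ_mul_of_le hl (le_max_right k l)
  calc x = x ^ (m + 1) * a ^ m := (hx.mul_pow_succ_mul_pow m).symm
    _ = x ^ (m + 1) * (a ^ (m + 1) * y) := by rw [hym]
    _ = x ^ (m + 1) * a ^ m * a * y := by rw [pow_succ a m]; simp only [mul_assoc]
    _ = x * a * (a ^ m * y ^ (m + 1)) := by rw [hx.mul_pow_succ_mul_pow, hy.pow_mul_pow_succ]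
    _ = x * a ^ (m + 1) * y ^ (m + 1) := by rw [pow_succ' a m]; simp only [mul_assoc]
    _ = y := by rw [hxm, hy.pow_mul_pow_succ]

theorem map {F : Type*} [FunLike F M N] [MonoidHomClass F M N] (f : F) (h : IsDrazin a x) :
    IsDrazin (f a) (f x) := by
  obtain ⟨⟨k, hk⟩, h2, h3⟩ := h
  refine ⟨⟨k, ?_⟩, ?_, ?_⟩ <;> simp only [← map_pow, ← map_mul, hk, h2, h3]

theorem conjM {n : ℕ} {M X : Matrix (Fin n) (Fin n) ℂ} (h : IsDrazin M X) :
    IsDrazin (conjM M) (conjM X) := by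
  unfold _root_.conjM
  simpa only [RingHom.mapMatrix_apply] using h.map (starRingEnd ℂ).mapMatrix

end IsDrazin

theorem isDrazin_pi {ι : Type*} [Finite ι] {M : ι → Type*} [∀ i, Monoid (M i)]
    {a x : ∀ i, M i} (h : ∀ i, IsDrazin (a i) (x i)) : IsDrazin a x := by
  have := Fintype.ofFinite ι
  choose k hk using fun i => (h i).1
  refine ⟨⟨Finset.univ.sup k, funext fun i => ?_⟩, funext fun i => (h i).2.1,
    funext fun i => (h i).2.2⟩
  exact IsDrazin.pow_succ_mul_of_le (hk i) (Finset.le_sup (Finset.mem_univ i))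

open Polynomial in
theorem exists_isDrazin_of_isAlgebraic {K A : Type*} [Field K] [Ring A] [Algebra K A] {a : A}
    (ha : IsAlgebraic K a) : ∃ x, IsDrazin a x := by
  obtain ⟨q, hq0, hqa⟩ := ha
  obtain ⟨q', hq, hnd⟩ := q.exists_eq_pow_rootMultiplicity_mul_and_not_dvd hq0 0
  rw [map_zero, sub_zero] at hq hnd
  set r := q.rootMultiplicity 0
  obtain ⟨s, t, hst⟩ := (irreducible_X.coprime_iff_not_dvd.mpr hnd).pow_left (m := r + 1)
  -- The witness `g = s * X ^ r` satisfies `X * g ≡ 1 mod q'` and `g ≡ 0 mod X ^ r`, so both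
  -- Drazin identities hold modulo `q = X ^ r * q'`.
  have h1 : X ^ (r + 1) * (s * X ^ r) = X ^ r - t * q := by
    rw [hq]; linear_combination (X ^ r : K[X]) * hst
  have h2 : s * X ^ r * X * (s * X ^ r) = s * X ^ r - s * t * q := by
    rw [hq]; linear_combination (s * X ^ r : K[X]) * hst
  refine ⟨aeval a (s * X ^ r), ⟨r, ?_⟩, ?_, ?_⟩
  · simpa [hqa] using congrArg (aeval a) h1
  · simpa [hqa] using congrArg (aeval a) h2
  · have := congrArg (aeval a) (mul_comm X (s * X ^ r))
    rwa [_root_.map_mul, _root_.map_mul (aeval a) (s * X ^ r), aeval_X] at this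

section Fourier

open ZMod

variable {m n l p : ℕ} [NeZero p]

theorem xi_pow_val_mul (i k : ZMod p) : xi p ^ (i.val * k.val) = stdAddChar (-(i * k)) := by
  have hcast : -(i * k) = ((-(i.val * k.val : ℕ) : ℤ) : ZMod p) := by simp
  rw [hcast, stdAddChar_coe, xi, ← Complex.exp_nat_mul]
  congr 1
  push_cast
  ring

theorem fblock_eq_dft (X : Tensor ℂ m n p) : fblock X = 𝓕 X := by
  funext i
  simp only [fblock, dft_apply, xi_pow_val_mul, mul_comm i]

theorem fblock_injective : Function.Injective (fblock : Tensor ℂ m n p → _) := by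
  rw [show (fblock : Tensor ℂ m n p → _) = 𝓕 from funext fblock_eq_dft]
  exact dft.injective

theorem fblock_tpr (A : Tensor ℂ m n p) (B : Tensor ℂ n l p) (i : ZMod p) :
    fblock (tpr A B) i = fblock A i * fblock B i := by
  simp only [fblock_eq_dft, dft_apply, tpr, Finset.smul_sum, Matrix.sum_mul, Matrix.mul_sum,
    Matrix.smul_mul, Matrix.mul_smul]
  rw [Finset.sum_comm]
  refine Finset.sum_congr rfl fun j _ => ?_
  rw [← Equiv.sum_comp (Equiv.addRight j)]
  refine Finset.sum_congr rfl fun k _ => ?_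
  rw [Equiv.coe_addRight, add_sub_cancel_right, smul_smul, ← AddChar.map_add_eq_mul]
  congr 2
  ring

theorem fblock_tId (i : ZMod p) : fblock (tId ℂ n p) i = 1 := by
  simp [fblock, tId]

theorem fblock_tpow (A : Tensor ℂ n n p) (k : ℕ) (i : ZMod p) :
    fblock (tpow A k) i = fblock A i ^ k := by
  induction k with
  | zero => exact fblock_tId i
  | succ k ih => rw [tpow, fblock_tpr, ih, pow_succ']

theorem conjM_conjM (M : Matrix (Fin m) (Fin n) ℂ) : conjM (conjM M) = M := by
  ext r c
  simp [conjM]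

theorem fblock_conjM (X : Tensor ℂ m n p) (i : ZMod p) :
    fblock (fun k => conjM (X k)) i = conjM (fblock X (-i)) := by
  ext r c
  simp [fblock_eq_dft, dft_apply, conjM, Matrix.sum_apply, AddChar.map_neg_eq_conj]

end Fourier

section Complexification

variable {m n l p : ℕ}

theorem cplx_injective : Function.Injective (cplx : Tensor ℝ m n p → Tensor ℂ m n p) := by
  intro A B h
  funext i
  ext r c
  exact Complex.ofReal_injective (congrFun (congrFun (congrFun h i) r) c)

theorem conjM_cplx (A : Tensor ℝ m n p) (k : ZMod p) : conjM (cplx A k) = cplx A k := by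
  ext r c
  simp [conjM, cplx]

theorem exists_cplx_eq_of_conjM_eq {X : Tensor ℂ m n p} (hX : ∀ k, conjM (X k) = X k) :
    ∃ A : Tensor ℝ m n p, cplx A = X := by
  refine ⟨fun k => (X k).map Complex.re, funext fun k => ?_⟩
  ext r c
  exact Complex.conj_eq_iff_re.mp (congrFun (congrFun (hX k) r) c)

variable [NeZero p]

theorem cplx_tpr (A : Tensor ℝ m n p) (B : Tensor ℝ n l p) :
    cplx (tpr A B) = tpr (cplx A) (cplx B) := by
  funext i
  ext r c
  simp [cplx, tpr, Matrix.sum_apply, Matrix.mul_apply]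

theorem cplx_tpow (A : Tensor ℝ n n p) (k : ℕ) : cplx (tpow A k) = tpow (cplx A) k := by
  induction k with
  | zero => funext i; by_cases h : i = 0 <;> simp [tpow, tId, cplx, h]
  | succ k ih => rw [tpow, cplx_tpr, ih, tpow]

theorem fblock_cplx_neg (A : Tensor ℝ m n p) (i : ZMod p) :
    fblock (cplx A) (-i) = conjM (fblock (cplx A) i) := by
  simpa only [conjM_cplx, neg_neg] using fblock_conjM (cplx A) (-i)

theorem exists_fblock_cplx_eq {E : ZMod p → Matrix (Fin m) (Fin n) ℂ}
    (hE : ∀ i, E (-i) = conjM (E i)) : ∃ A : Tensor ℝ m n p, fblock (cplx A) = E := by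
  set X := (ZMod.dft).symm E
  have hX : fblock X = E := by rw [fblock_eq_dft, LinearEquiv.apply_symm_apply]
  have hreal : (fun k => conjM (X k)) = X := fblock_injective <| funext fun i => by
    rw [fblock_conjM, hX, hE, conjM_conjM]
  obtain ⟨A, hA⟩ := exists_cplx_eq_of_conjM_eq (congrFun hreal)
  exact ⟨A, hA ▸ hX⟩

theorem fblock_cplx_injective :
    Function.Injective fun A : Tensor ℝ m n p => fblock (cplx A) :=
  fblock_injective.comp cplx_injective

theorem fblock_cplx_tpr (A B : Tensor ℝ n n p) :
    fblock (cplx (tpr A B)) = fblock (cplx A) * fblock (cplx B) :=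
  funext fun i => by rw [cplx_tpr, fblock_tpr, Pi.mul_apply]

theorem fblock_cplx_tpow (A : Tensor ℝ n n p) (k : ℕ) :
    fblock (cplx (tpow A k)) = fblock (cplx A) ^ k :=
  funext fun i => by rw [cplx_tpow, fblock_tpow, Pi.pow_apply]

end Complexification

section BlockCirculant

open ZMod

variable {n p : ℕ} [NeZero p]

theorem Fmat_apply (j k : ZMod p) :
    Fmat p j k = (Real.sqrt p : ℂ)⁻¹ * stdAddChar (-(j * k)) := by
  simp [Fmat, xi_pow_val_mul]

theorem conjTranspose_Fmat_mul_Fmat : (Fmat p)ᴴ * Fmat p = 1 := by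
  ext j k
  have hsqrt : (Real.sqrt p : ℂ)⁻¹ * (Real.sqrt p : ℂ)⁻¹ = (p : ℂ)⁻¹ := by
    rw [← mul_inv, ← Complex.ofReal_mul, Real.mul_self_sqrt (Nat.cast_nonneg p),
      Complex.ofReal_natCast]
  have hchar (a : ZMod p) :
      stdAddChar (a * j) * stdAddChar (-(a * k)) = stdAddChar (N := p) (a * (j - k)) := by
    rw [← AddChar.map_add_eq_mul, mul_sub, sub_eq_add_neg]
  calc ((Fmat p)ᴴ * Fmat p) j k = (p : ℂ)⁻¹ * ∑ a : ZMod p, stdAddChar (a * (j - k)) := by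
        simp only [Matrix.mul_apply, Matrix.conjTranspose_apply, Fmat_apply, star_mul',
          Complex.star_def, map_inv₀, Complex.conj_ofReal, ← AddChar.map_neg_eq_conj, neg_neg,
          Finset.mul_sum, ← hsqrt, ← hchar]
        exact Finset.sum_congr rfl fun a _ => by ring
    _ = (1 : Matrix (ZMod p) (ZMod p) ℂ) j k := by
        rw [AddChar.sum_mulShift _ (isPrimitive_stdAddChar p)]
        by_cases h : j = k <;> simp [h, sub_eq_zero, Matrix.one_apply]

theorem Fmat_kronecker_mul_bcirc (X : Tensor ℂ n n p) :
    (Fmat p ⊗ₖ (1 : Matrix (Fin n) (Fin n) ℂ)) * bcirc X =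
      _root_.blockDiag (fblock X) * (Fmat p ⊗ₖ (1 : Matrix (Fin n) (Fin n) ℂ)) := by
  ext ⟨j, r⟩ ⟨b, c⟩
  simp only [bcirc, _root_.blockDiag, Matrix.mul_apply, Fintype.sum_prod_type, kroneckerMap_apply,
    Matrix.one_apply, of_apply, mul_ite, ite_mul, mul_one, mul_zero, zero_mul, Finset.sum_ite_eq,
    Finset.sum_ite_eq', Finset.mem_univ, if_true]
  rw [← Equiv.sum_comp (Equiv.addRight b), fblock_eq_dft, dft_apply, Matrix.sum_apply,
    Finset.sum_mul]
  refine Finset.sum_congr rfl fun d _ => ?_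
  simp only [Equiv.coe_addRight, add_sub_cancel_right, Fmat_apply, Matrix.smul_apply, smul_eq_mul]
  rw [show -(j * (d + b)) = -(d * j) + -(j * b) by ring, AddChar.map_add_eq_mul]
  ring

theorem bcirc_eq_fourier (X : Tensor ℂ n n p) :
    bcirc X = ((Fmat p)ᴴ ⊗ₖ (1 : Matrix (Fin n) (Fin n) ℂ)) * _root_.blockDiag (fblock X) *
      (Fmat p ⊗ₖ (1 : Matrix (Fin n) (Fin n) ℂ)) := by
  have hunitary : ((Fmat p)ᴴ ⊗ₖ (1 : Matrix (Fin n) (Fin n) ℂ)) *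
      (Fmat p ⊗ₖ (1 : Matrix (Fin n) (Fin n) ℂ)) = 1 := by
    rw [← Matrix.mul_kronecker_mul, conjTranspose_Fmat_mul_Fmat, Matrix.one_mul,
      Matrix.one_kronecker_one]
  rw [Matrix.mul_assoc, ← Fmat_kronecker_mul_bcirc, ← Matrix.mul_assoc, hunitary, Matrix.one_mul]

end BlockCirculant

theorem tensor_drazin_of_isDrazin_fblock {n p : ℕ} [NeZero p] {A D : Tensor ℝ n n p}
    (h : IsDrazin (fblock (cplx A)) (fblock (cplx D))) :
    (∃ k : ℕ, tpr (tpow A (k + 1)) D = tpow A k) ∧ tpr D (tpr A D) = D ∧ tpr A D = tpr D A := by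
  obtain ⟨⟨k, hk⟩, hDAD, hcomm⟩ := h
  refine ⟨⟨k, fblock_cplx_injective ?_⟩, fblock_cplx_injective ?_, fblock_cplx_injective ?_⟩
  · simpa only [fblock_cplx_tpr, fblock_cplx_tpow] using hk
  · simpa only [fblock_cplx_tpr, mul_assoc] using hDAD
  · simpa only [fblock_cplx_tpr] using hcomm

theorem stmt15 {n p : ℕ} [NeZero p] (A : Tensor ℝ n n p) :
    ∃ D : Tensor ℝ n n p,
      ((∃ k : ℕ, tpr (tpow A (k + 1)) D = tpow A k) ∧
        tpr D (tpr A D) = D ∧ tpr A D = tpr D A) ∧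
      ∀ Dk : ZMod p → Matrix (Fin n) (Fin n) ℂ,
        (∀ i, IsDrazinM (fblock (cplx A) i) (Dk i)) →
        bcirc (cplx D) =
          ((Fmat p)ᴴ ⊗ₖ (1 : Matrix (Fin n) (Fin n) ℂ)) * blockDiag Dk *
            ((Fmat p) ⊗ₖ (1 : Matrix (Fin n) (Fin n) ℂ)) := by
  choose E hE using fun i =>
    exists_isDrazin_of_isAlgebraic (Algebra.IsAlgebraic.isAlgebraic (R := ℂ) (fblock (cplx A) i))
  have hE_neg (i : ZMod p) : E (-i) = conjM (E i) := by
    refine (hE (-i)).unique ?_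
    rw [fblock_cplx_neg]
    exact (hE i).conjM
  obtain ⟨D, hD⟩ := exists_fblock_cplx_eq hE_neg
  subst hD
  refine ⟨D, tensor_drazin_of_isDrazin_fblock (isDrazin_pi hE), fun Dk hDk => ?_⟩
  obtain rfl : Dk = fblock (cplx D) := funext fun i => IsDrazin.unique (hDk i) (hE i)
  exact bcirc_eq_fourier (cplx D)
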